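/- Let Θ: ℝ^m → ℝ^m be L-Lipschitz with L ≥ 1, and let φ_n be as above. Then the Lipschitz seminorm of φ_n on (ℝ^{nm}, ℓ²) is at most ((1+n) Σ_{k=0}^{n-1} ((1+1/n)L²)^k)^{1/2}; in particular it is at most (n(n+1)(e-1))^{1/2} when L = 1. -/

import Mathlib

open MeasureTheory Real Finset

variable {m : ℕ}

/-- The solution sequence of the recursion `z_{k+1} = Θ(z_k) + y_{k+1}`, where the input
`w` encodes `w 0 = z_0` and `w k = y_k` for `k ≥ 1`. -/
noncomputable def armaSeq (Θ : EuclideanSpace ℝ (Fin m) → EuclideanSpace ℝ (Fin m))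
    (w : ℕ → EuclideanSpace ℝ (Fin m)) : ℕ → EuclideanSpace ℝ (Fin m)
  | 0 => w 0
  | k + 1 => Θ (armaSeq Θ w k) + w (k + 1)

/-- The map `φ_n : (z_0, y_1, …, y_{n-1}) ↦ (z_0, z_1, …, z_{n-1})` on `(ℝ^{nm}, ℓ²)`. -/
noncomputable def armaMap (n : ℕ) (Θ : EuclideanSpace ℝ (Fin m) → EuclideanSpace ℝ (Fin m))
    (w : PiLp 2 (fun _ : Fin n => EuclideanSpace ℝ (Fin m))) :
    PiLp 2 (fun _ : Fin n => EuclideanSpace ℝ (Fin m)) :=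
  WithLp.toLp 2 (fun i => armaSeq Θ (fun k => if h : k < n then w ⟨k, h⟩ else 0) (i : ℕ))

/-!
With `δₖ = dist (zₖ, z'ₖ)` and `eₖ = dist (wₖ, w'ₖ)`, the recursion gives
`δₖ₊₁ ≤ K δₖ + eₖ₊₁`, and the weighted inequality `(a + b)² ≤ (1 + ε) a² + (1 + ε⁻¹) b²` turns this
into the linear recursion `δₖ₊₁² ≤ (1 + ε) K² δₖ² + (1 + ε⁻¹) eₖ₊₁²`. Unrolling it and summing over
`k < n` bounds `∑ δₖ²` by `(1 + ε⁻¹) ∑_{i<n} ((1 + ε) K²)ⁱ · ∑ eₖ²`. The choice `ε = 1/n` gives the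
theorem, and for `K = 1` the geometric sum is `n ((1 + 1/n)ⁿ - 1) ≤ n (e - 1)`.
-/

open scoped NNReal

lemma add_sq_le_one_add_mul_sq {ε : ℝ} (hε : 0 < ε) (a b : ℝ) :
    (a + b) ^ 2 ≤ (1 + ε) * a ^ 2 + (1 + ε⁻¹) * b ^ 2 := by
  have hgap : (1 + ε) * a ^ 2 + (1 + ε⁻¹) * b ^ 2 - (a + b) ^ 2 = (ε * a - b) ^ 2 / ε := by
    field_simp
    ring
  rw [← sub_nonneg, hgap]
  positivity

lemma le_sum_pow_mul_of_le_mul_add {a b : ℕ → ℝ} {r : ℝ} (hr : 0 ≤ r) (h₀ : a 0 ≤ b 0)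
    (hsucc : ∀ k, a (k + 1) ≤ r * a k + b (k + 1)) (k : ℕ) :
    a k ≤ ∑ j ∈ range (k + 1), r ^ (k - j) * b j := by
  induction k with
  | zero => simpa using h₀
  | succ k ih =>
    have hshift : r * ∑ j ∈ range (k + 1), r ^ (k - j) * b j =
        ∑ j ∈ range (k + 1), r ^ (k + 1 - j) * b j := by
      rw [mul_sum]
      refine sum_congr rfl fun j hj => ?_
      rw [← mul_assoc, ← pow_succ', Nat.sub_add_comm (Nat.lt_succ_iff.mp (mem_range.mp hj))]
    calc a (k + 1) ≤ r * ∑ j ∈ range (k + 1), r ^ (k - j) * b j + b (k + 1) :=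
          (hsucc k).trans (by gcongr)
      _ = ∑ j ∈ range (k + 2), r ^ (k + 1 - j) * b j := by
          rw [hshift, sum_range_succ _ (k + 1), Nat.sub_self, pow_zero, one_mul]

lemma sum_range_sum_pow_mul_le {b : ℕ → ℝ} {r : ℝ} (hr : 0 ≤ r) (hb : ∀ j, 0 ≤ b j) (n : ℕ) :
    ∑ k ∈ range n, ∑ j ∈ range (k + 1), r ^ (k - j) * b j ≤
      (∑ i ∈ range n, r ^ i) * ∑ j ∈ range n, b j := by
  calc ∑ k ∈ range n, ∑ j ∈ range (k + 1), r ^ (k - j) * b j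
      = ∑ j ∈ range n, ∑ k ∈ Ico j n, r ^ (k - j) * b j := by
        refine sum_comm' fun k j => ?_
        simp only [mem_range, mem_Ico]
        omega
    _ = ∑ j ∈ range n, (∑ i ∈ range (n - j), r ^ i) * b j := by
        simp only [sum_Ico_eq_sum_range, Nat.add_sub_cancel_left, sum_mul]
    _ ≤ ∑ j ∈ range n, (∑ i ∈ range n, r ^ i) * b j := by
        gcongr with j
        · exact hb j
        · exact Nat.sub_le n j
    _ = (∑ i ∈ range n, r ^ i) * ∑ j ∈ range n, b j := (mul_sum _ _ _).symm

lemma sum_range_one_add_inv_pow_le (n : ℕ) :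
    ∑ k ∈ range n, (1 + (n : ℝ)⁻¹) ^ k ≤ n * (exp 1 - 1) := by
  rcases n.eq_zero_or_pos with rfl | hn
  · simp
  have hn' : (n : ℝ)⁻¹ ≠ 0 := by positivity
  rw [geom_sum_eq (by simpa using hn'), add_sub_cancel_left, div_inv_eq_mul, mul_comm]
  gcongr
  exact one_add_inv_pow_le_exp

section armaSeq

variable {Θ : EuclideanSpace ℝ (Fin m) → EuclideanSpace ℝ (Fin m)} {K : ℝ≥0}

lemma dist_armaSeq_succ_le (hΘ : LipschitzWith K Θ) (w w' : ℕ → EuclideanSpace ℝ (Fin m))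
    (k : ℕ) :
    dist (armaSeq Θ w (k + 1)) (armaSeq Θ w' (k + 1)) ≤
      K * dist (armaSeq Θ w k) (armaSeq Θ w' k) + dist (w (k + 1)) (w' (k + 1)) :=
  (dist_add_add_le _ _ _ _).trans (by gcongr; exact hΘ.dist_le_mul _ _)

lemma dist_armaSeq_sq_le (hΘ : LipschitzWith K Θ) {ε : ℝ} (hε : 0 < ε)
    (w w' : ℕ → EuclideanSpace ℝ (Fin m)) (k : ℕ) :
    dist (armaSeq Θ w k) (armaSeq Θ w' k) ^ 2 ≤
      ∑ j ∈ range (k + 1), ((1 + ε) * K ^ 2) ^ (k - j) * ((1 + ε⁻¹) * dist (w j) (w' j) ^ 2) := by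
  refine le_sum_pow_mul_of_le_mul_add (a := fun k => dist (armaSeq Θ w k) (armaSeq Θ w' k) ^ 2)
    (b := fun j => (1 + ε⁻¹) * dist (w j) (w' j) ^ 2) (by positivity) ?_ (fun k => ?_) k
  · exact le_mul_of_one_le_left (sq_nonneg _) (by simp [hε.le])
  · calc dist (armaSeq Θ w (k + 1)) (armaSeq Θ w' (k + 1)) ^ 2
        ≤ (K * dist (armaSeq Θ w k) (armaSeq Θ w' k) + dist (w (k + 1)) (w' (k + 1))) ^ 2 :=
          pow_le_pow_left₀ dist_nonneg (dist_armaSeq_succ_le hΘ w w' k) 2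
      _ ≤ (1 + ε) * (K * dist (armaSeq Θ w k) (armaSeq Θ w' k)) ^ 2 +
            (1 + ε⁻¹) * dist (w (k + 1)) (w' (k + 1)) ^ 2 :=
          add_sq_le_one_add_mul_sq hε _ _
      _ = _ := by ring

lemma sum_dist_armaSeq_sq_le (hΘ : LipschitzWith K Θ) {ε : ℝ} (hε : 0 < ε)
    (w w' : ℕ → EuclideanSpace ℝ (Fin m)) (n : ℕ) :
    ∑ k ∈ range n, dist (armaSeq Θ w k) (armaSeq Θ w' k) ^ 2 ≤
      (1 + ε⁻¹) * (∑ i ∈ range n, ((1 + ε) * K ^ 2) ^ i) *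
        ∑ j ∈ range n, dist (w j) (w' j) ^ 2 := by
  calc ∑ k ∈ range n, dist (armaSeq Θ w k) (armaSeq Θ w' k) ^ 2
      ≤ ∑ k ∈ range n, ∑ j ∈ range (k + 1),
          ((1 + ε) * K ^ 2) ^ (k - j) * ((1 + ε⁻¹) * dist (w j) (w' j) ^ 2) :=
        sum_le_sum fun k _ => dist_armaSeq_sq_le hΘ hε w w' k
    _ ≤ (∑ i ∈ range n, ((1 + ε) * K ^ 2) ^ i) *
          ∑ j ∈ range n, (1 + ε⁻¹) * dist (w j) (w' j) ^ 2 :=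
        sum_range_sum_pow_mul_le (by positivity) (fun j => by positivity) n
    _ = _ := by rw [← mul_sum]; ring

lemma dist_armaMap_le (hΘ : LipschitzWith K Θ) {ε : ℝ} (hε : 0 < ε) (n : ℕ)
    (w w' : PiLp 2 (fun _ : Fin n => EuclideanSpace ℝ (Fin m))) :
    dist (armaMap n Θ w) (armaMap n Θ w') ≤
      sqrt ((1 + ε⁻¹) * ∑ i ∈ range n, ((1 + ε) * K ^ 2) ^ i) * dist w w' := by
  set pad : PiLp 2 (fun _ : Fin n => EuclideanSpace ℝ (Fin m)) → ℕ → EuclideanSpace ℝ (Fin m) :=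
    fun v k => if h : k < n then v ⟨k, h⟩ else 0
  have hφ : dist (armaMap n Θ w) (armaMap n Θ w') ^ 2 =
      ∑ k ∈ range n, dist (armaSeq Θ (pad w) k) (armaSeq Θ (pad w') k) ^ 2 := by
    rw [PiLp.dist_sq_eq_of_L2, ← Fin.sum_univ_eq_sum_range]
    rfl
  have hw : dist w w' ^ 2 = ∑ j ∈ range n, dist (pad w j) (pad w' j) ^ 2 := by
    rw [PiLp.dist_sq_eq_of_L2, ← Fin.sum_univ_eq_sum_range]
    simp [pad]
  have hC : 0 ≤ (1 + ε⁻¹) * ∑ i ∈ range n, ((1 + ε) * K ^ 2) ^ i := by positivity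
  rw [← pow_le_pow_iff_left₀ dist_nonneg (by positivity) two_ne_zero, mul_pow, sq_sqrt hC, hφ, hw]
  exact sum_dist_armaSeq_sq_le hΘ hε _ _ n

end armaSeq

/-- If `Θ` is `L`-Lipschitz with `L ≥ 1`, then the Lipschitz seminorm of `φ_n` on
`(ℝ^{nm}, ℓ²)` is at most `((1+n) ∑_{k=0}^{n-1} ((1+1/n)L²)^k)^{1/2}`; in particular at
most `(n(n+1)(e-1))^{1/2}` when `L = 1`. -/
theorem armaMap_lipschitz_of_ge_one (n : ℕ) (hn : 1 ≤ n) (L : ℝ) (hL : 1 ≤ L)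
    (Θ : EuclideanSpace ℝ (Fin m) → EuclideanSpace ℝ (Fin m))
    (hΘ : LipschitzWith (Real.toNNReal L) Θ) :
    (∀ w w' : PiLp 2 (fun _ : Fin n => EuclideanSpace ℝ (Fin m)),
      dist (armaMap n Θ w) (armaMap n Θ w') ≤
        Real.sqrt ((1 + n) * ∑ k ∈ range n, ((1 + 1 / n) * L ^ 2) ^ k) * dist w w') ∧
    (L = 1 → ∀ w w' : PiLp 2 (fun _ : Fin n => EuclideanSpace ℝ (Fin m)),
      dist (armaMap n Θ w) (armaMap n Θ w') ≤
        Real.sqrt (n * (n + 1) * (Real.exp 1 - 1)) * dist w w') := by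
  have hε : (0 : ℝ) < (n : ℝ)⁻¹ := inv_pos.2 (Nat.cast_pos.2 hn)
  have hbound : ∀ w w' : PiLp 2 (fun _ : Fin n => EuclideanSpace ℝ (Fin m)),
      dist (armaMap n Θ w) (armaMap n Θ w') ≤
        Real.sqrt ((1 + n) * ∑ k ∈ range n, ((1 + 1 / n) * L ^ 2) ^ k) * dist w w' := by
    intro w w'
    simpa [one_div, Real.coe_toNNReal L (zero_le_one.trans hL)] using
      dist_armaMap_le hΘ hε n w w'
  refine ⟨hbound, ?_⟩
  rintro rfl w w'
  refine (hbound w w').trans (mul_le_mul_of_nonneg_right (sqrt_le_sqrt ?_) dist_nonneg)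
  calc (1 + n) * ∑ k ∈ range n, ((1 + 1 / n) * (1 : ℝ) ^ 2) ^ k
      ≤ (1 + n) * (n * (exp 1 - 1)) := by
        gcongr
        simpa [one_div] using sum_range_one_add_inv_pow_le n
    _ = n * (n + 1) * (exp 1 - 1) := by ring
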